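/- Let n ≥ 1 and let (e_1, …, e_n) be an orthonormal basis of V. Then the trace of the linear endomorphism c(e_1) ∘ c(e_2) ∘ ⋯ ∘ c(e_n) of ⋀V is 0. (This is the statement that the supertrace of the identity vanishes, which underlies the paper's identity Swres[(D²)^{-(n−2)/2}] = 0.) -/

import Mathlib

/-!
The grading involution `A` of `⋀V` anticommutes with every `c(v)`, and the `c(eᵢ)` pairwise
anticommute with `c(eᵢ)² = -1`. Hence `U = c(e₁) A` is an involution that anticommutes with
`c(e₁)` and commutes with `c(eᵢ)` for `i ≥ 2`, so `U P U = -P` for `P = c(e₁) ⋯ c(eₙ)`, and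
`tr P = tr (U P U) = -tr P`.
-/

theorem LinearMap.trace_eq_zero_of_mul_anticomm {R M : Type*} [CommRing R] [IsAddTorsionFree R]
    [AddCommGroup M] [Module R M] {f u : Module.End R M} (hu : u * u = 1)
    (hf : u * f = -(f * u)) : trace R M f = 0 := by
  rw [← self_eq_neg]
  calc trace R M f = trace R M (u * f * u) := by rw [trace_mul_cycle, hu, one_mul]
    _ = -trace R M f := by rw [hf, neg_mul, mul_assoc, hu, mul_one, map_neg]

theorem commute_mul_of_mul_anticomm {A : Type*} [Ring A] {x a b : A} (ha : x * a = -(a * x))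
    (hb : x * b = -(b * x)) : Commute x (a * b) := by
  rw [Commute, SemiconjBy, ← mul_assoc, ha, neg_mul, mul_assoc, hb, mul_neg, neg_neg, mul_assoc]

theorem exists_involution_anticomm_mul_prod {A : Type*} [Ring A] {x a : A} {l : List A}
    (hx : x * x = -1) (ha : a * a = 1) (hax : a * x = -(x * a))
    (hl : ∀ y ∈ l, y * x = -(x * y) ∧ y * a = -(a * y)) :
    ∃ u : A, u * u = 1 ∧ u * (x * l.prod) = -(x * l.prod * u) := by
  have hux : x * a * x = -(x * (x * a)) := by rw [mul_assoc, hax, mul_neg, ← mul_assoc]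
  have hul : Commute (x * a) l.prod := Commute.list_prod_right _ _ fun y hy =>
    (commute_mul_of_mul_anticomm (hl y hy).1 (hl y hy).2).symm
  refine ⟨x * a, ?_, ?_⟩
  · rw [← mul_assoc, hux, neg_mul, ← mul_assoc, mul_assoc, hx, ha, neg_one_mul, neg_neg]
  · rw [← mul_assoc, hux, neg_mul, mul_assoc, hul.eq, ← mul_assoc]

namespace ExteriorAlgebra

variable {R M : Type*} [CommRing R] [AddCommGroup M] [Module R M]

theorem involute_contractLeft (d : Module.Dual R M) (x : ExteriorAlgebra R M) :
    CliffordAlgebra.involute (CliffordAlgebra.contractLeft d x)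
      = -CliffordAlgebra.contractLeft d (CliffordAlgebra.involute x) := by
  induction x using CliffordAlgebra.left_induction with
  | algebraMap r => simp
  | add x y hx hy => rw [map_add, map_add, hx, hy, map_add, map_add, neg_add]
  | ι_mul x m hx =>
    simp only [CliffordAlgebra.contractLeft_ι_mul, map_sub, map_smul, map_mul,
      CliffordAlgebra.involute_ι, hx, neg_mul, map_neg, mul_neg, neg_neg, neg_sub]

/-- `ε(v) - ι(d)`; for `d = ⟪v, ·⟫` this is `c(v)`. -/
noncomputable def cliffordOp (v : M) (d : Module.Dual R M) : Module.End R (ExteriorAlgebra R M) :=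
  LinearMap.mulLeft R (ι R v) - CliffordAlgebra.contractLeft d

theorem cliffordOp_apply (v : M) (d : Module.Dual R M) (x : ExteriorAlgebra R M) :
    cliffordOp v d x = ι R v * x - CliffordAlgebra.contractLeft d x := rfl

theorem cliffordOp_mul_add_mul_swap (v w : M) (d d' : Module.Dual R M) :
    cliffordOp v d * cliffordOp w d' + cliffordOp w d' * cliffordOp v d = -(d w + d' v) • 1 := by
  refine LinearMap.ext fun x => ?_
  have hι : CliffordAlgebra.ι (0 : QuadraticForm R M) = ι R := rfl
  have hεε : ι R v * (ι R w * x) = -(ι R w * (ι R v * x)) := by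
    rw [← mul_assoc, ← mul_assoc, ← neg_mul,
      ← eq_neg_iff_add_eq_zero.mpr (ι_add_mul_swap v w)]
  have hιι := CliffordAlgebra.contractLeft_comm d d' x
  simp only [LinearMap.add_apply, Module.End.mul_apply, cliffordOp_apply, map_sub,
    CliffordAlgebra.contractLeft_ι_mul, hι, LinearMap.smul_apply, Module.End.one_apply]
  rw [hιι, hεε]
  module

theorem cliffordOp_mul_self (v : M) (d : Module.Dual R M) :
    cliffordOp v d * cliffordOp v d = -d v • 1 := by
  refine LinearMap.ext fun x => ?_
  have hι : CliffordAlgebra.ι (0 : QuadraticForm R M) = ι R := rfl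
  simp only [Module.End.mul_apply, cliffordOp_apply, map_sub, CliffordAlgebra.contractLeft_ι_mul,
    CliffordAlgebra.contractLeft_contractLeft, hι, ← mul_assoc, ι_sq_zero, zero_mul,
    LinearMap.smul_apply, Module.End.one_apply]
  module

theorem cliffordOp_anticomm {v w : M} {d d' : Module.Dual R M} (hdw : d w = 0) (hd'v : d' v = 0) :
    cliffordOp w d' * cliffordOp v d = -(cliffordOp v d * cliffordOp w d') := by
  rw [eq_neg_iff_add_eq_zero, add_comm, cliffordOp_mul_add_mul_swap, hdw, hd'v, add_zero,
    neg_zero, zero_smul]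

theorem involute_mul_cliffordOp (v : M) (d : Module.Dual R M) :
    CliffordAlgebra.involute.toLinearMap * cliffordOp v d
      = -(cliffordOp v d * CliffordAlgebra.involute.toLinearMap) := by
  refine LinearMap.ext fun x => ?_
  simp only [Module.End.mul_apply, LinearMap.neg_apply, AlgHom.toLinearMap_apply, cliffordOp_apply,
    map_sub, map_mul, involute_contractLeft, CliffordAlgebra.involute_ι, neg_mul]
  abel

end ExteriorAlgebra

open ExteriorAlgebra in
theorem trace_prod_cliffordOp_eq_zero {V : Type*} [NormedAddCommGroup V] [InnerProductSpace ℝ V]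
    {n : ℕ} {v : Fin (n + 1) → V} (hv : Orthonormal ℝ v) :
    LinearMap.trace ℝ _
      (List.ofFn fun i => cliffordOp (v i) (innerₛₗ ℝ (v i))).prod = 0 := by
  set c := fun i => cliffordOp (v i) (innerₛₗ ℝ (v i))
  set A : Module.End ℝ (ExteriorAlgebra ℝ V) := CliffordAlgebra.involute.toLinearMap
  have hc0 : c 0 * c 0 = -1 := by
    rw [cliffordOp_mul_self, innerₛₗ_apply_apply, real_inner_self_eq_norm_sq, hv.1 0, one_pow]
    exact neg_one_smul ℝ (1 : Module.End ℝ (ExteriorAlgebra ℝ V))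
  have hA : ∀ i, A * c i = -(c i * A) := fun i => involute_mul_cliffordOp _ _
  have hc : ∀ i j, i ≠ j → c i * c j = -(c j * c i) := fun i j hij =>
    cliffordOp_anticomm (by simpa using hv.2 hij.symm) (by simpa using hv.2 hij)
  obtain ⟨u, hu, hanti⟩ := exists_involution_anticomm_mul_prod
    (l := List.ofFn fun i : Fin n => c i.succ) hc0
    (LinearMap.ext CliffordAlgebra.involute_involute) (hA 0) fun y hy => by
      obtain ⟨i, rfl⟩ := List.mem_ofFn.mp hy
      exact ⟨hc _ _ i.succ_ne_zero, neg_eq_iff_eq_neg.mp (hA _).symm⟩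
  rw [List.ofFn_succ, List.prod_cons]
  exact LinearMap.trace_eq_zero_of_mul_anticomm hu hanti

theorem supertrace_id_vanishes_general
    (V : Type*) [NormedAddCommGroup V] [InnerProductSpace ℝ V]
    (n : ℕ) (hn : 1 ≤ n) (e : OrthonormalBasis (Fin n) ℝ V) :
    LinearMap.trace ℝ (ExteriorAlgebra ℝ V)
      ((List.ofFn fun i : Fin n =>
        (LinearMap.mulLeft ℝ (ExteriorAlgebra.ι ℝ (e i))
          - CliffordAlgebra.contractLeft (Q := (0 : QuadraticForm ℝ V))
              (innerₛₗ ℝ (e i)) : Module.End ℝ (ExteriorAlgebra ℝ V))).prod) = 0 := by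
  obtain ⟨m, rfl⟩ := Nat.exists_eq_add_of_le' hn
  exact trace_prod_cliffordOp_eq_zero e.orthonormal

theorem supertrace_id_vanishes
    (V : Type*) [NormedAddCommGroup V] [InnerProductSpace ℝ V] [FiniteDimensional ℝ V]
    (n : ℕ) (hn : 1 ≤ n) (e : OrthonormalBasis (Fin n) ℝ V) :
    LinearMap.trace ℝ (ExteriorAlgebra ℝ V)
      ((List.ofFn fun i : Fin n =>
        (LinearMap.mulLeft ℝ (ExteriorAlgebra.ι ℝ (e i))
          - CliffordAlgebra.contractLeft (Q := (0 : QuadraticForm ℝ V))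
              (innerₛₗ ℝ (e i)) : Module.End ℝ (ExteriorAlgebra ℝ V))).prod) = 0 :=
  supertrace_id_vanishes_general V n hn e
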